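/- Let X and Y be Polish spaces, P ∈ P(X), c : X × X → [0,∞] a Borel transportation cost on X, ε ≥ 0, and f : X → Y a Borel bijection whose inverse f⁻¹ : Y → X is Borel. Then the pushforward of the OT ambiguity set is exactly an OT ambiguity set: f_# B_ε^c(P) = B_ε^{c∘(f⁻¹×f⁻¹)}(f_#P), where c∘(f⁻¹×f⁻¹) is the cost (y₁,y₂) ↦ c(f⁻¹(y₁), f⁻¹(y₂)) on Y. -/

import Mathlib

open MeasureTheory
open scoped ENNReal

noncomputable section

/-- The set of couplings of two measures. -/
def couplings {X : Type*} [MeasurableSpace X] (P Q : Measure X) :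
    Set (Measure (X × X)) :=
  {γ | IsProbabilityMeasure γ ∧ γ.map Prod.fst = P ∧ γ.map Prod.snd = Q}

/-- Optimal transport discrepancy with transportation cost `c`. -/
def OTCost {X : Type*} [MeasurableSpace X] (c : X × X → ℝ≥0∞) (P Q : Measure X) : ℝ≥0∞ :=
  ⨅ γ ∈ couplings P Q, ∫⁻ x, c x ∂γ

/-- The optimal transport ambiguity set of radius `ε` around `P`, for cost `c`. -/
def ambiguitySet {X : Type*} [MeasurableSpace X] (c : X × X → ℝ≥0∞) (ε : ℝ≥0∞)
    (P : Measure X) : Set (Measure X) :=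
  {Q | IsProbabilityMeasure Q ∧ OTCost c P Q ≤ ε}

/-!
Pushing a coupling of `P, Q` forward by `e × e` gives a coupling of `e_# P, e_# Q` whose cost for
`c ∘ (e⁻¹ × e⁻¹)` is its old cost for `c`; doing the same with `e⁻¹` goes back. So the OT
discrepancy is invariant, and `Q ↦ e_# Q` is a bijection of the ambiguity sets with inverse
`Q' ↦ e⁻¹_# Q'`.
-/

section

variable {X Y : Type*} [MeasurableSpace X] [MeasurableSpace Y]

lemma map_prodMap_mem_couplings {f : X → Y} (hf : Measurable f) {P Q : Measure X}
    {γ : Measure (X × X)} (hγ : γ ∈ couplings P Q) :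
    γ.map (Prod.map f f) ∈ couplings (P.map f) (Q.map f) := by
  obtain ⟨hprob, rfl, rfl⟩ := hγ
  have hff : Measurable (Prod.map f f) := hf.prodMap hf
  refine ⟨Measure.isProbabilityMeasure_map hff.aemeasurable, ?_, ?_⟩
  · rw [Measure.map_map measurable_fst hff, Measure.map_map hf measurable_fst]
    rfl
  · rw [Measure.map_map measurable_snd hff, Measure.map_map hf measurable_snd]
    rfl

lemma OTCost_map_le {f : X → Y} (hf : Measurable f) (c : Y × Y → ℝ≥0∞) (P Q : Measure X) :
    OTCost c (P.map f) (Q.map f) ≤ OTCost (c ∘ Prod.map f f) P Q :=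
  le_iInf₂ fun _ hγ =>
    iInf₂_le_of_le _ (map_prodMap_mem_couplings hf hγ) (lintegral_map_le c _)

lemma MeasurableEquiv.OTCost_map (e : X ≃ᵐ Y) (c : X × X → ℝ≥0∞) (P Q : Measure X) :
    OTCost (c ∘ Prod.map e.symm e.symm) (P.map e) (Q.map e) = OTCost c P Q := by
  refine le_antisymm ?_ ?_
  · calc OTCost (c ∘ Prod.map e.symm e.symm) (P.map e) (Q.map e)
        ≤ OTCost (c ∘ Prod.map e.symm e.symm ∘ Prod.map e e) P Q :=
          OTCost_map_le e.measurable _ _ _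
      _ = OTCost c P Q := by
        congr 1
        ext ⟨x₁, x₂⟩
        simp
  · calc OTCost c P Q
        = OTCost c ((P.map e).map e.symm) ((Q.map e).map e.symm) := by
          rw [e.map_symm_map, e.map_symm_map]
      _ ≤ OTCost (c ∘ Prod.map e.symm e.symm) (P.map e) (Q.map e) :=
          OTCost_map_le e.symm.measurable _ _ _

lemma MeasurableEquiv.image_map_ambiguitySet (e : X ≃ᵐ Y) (c : X × X → ℝ≥0∞) (ε : ℝ≥0∞)
    (P : Measure X) :
    (fun μ => μ.map e) '' ambiguitySet c ε P
      = ambiguitySet (c ∘ Prod.map e.symm e.symm) ε (P.map e) := by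
  rw [Set.image_eq_preimage_of_inverse (f := fun μ : Measure X => μ.map e)
    (g := fun ν => ν.map e.symm) (fun _ => e.map_symm_map) (fun _ => e.map_map_symm)]
  ext Q
  simp only [Set.mem_preimage, ambiguitySet, Set.mem_ofPred_eq,
    Measure.isProbabilityMeasure_map_iff e.symm.measurable.aemeasurable]
  rw [← e.OTCost_map c P, e.map_map_symm]

end

theorem pushforward_ambiguity_bijective_general
    {X Y : Type*}
    [MeasurableSpace X]
    [MeasurableSpace Y]
    (P : Measure X)
    (c : X × X → ℝ≥0∞) (ε : ℝ≥0∞)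
    (f : X → Y) (hf : Measurable f)
    (finv : Y → X) (hfinv : Measurable finv)
    (hleft : ∀ x, finv (f x) = x) (hright : ∀ y, f (finv y) = y) :
    (fun μ => μ.map f) '' ambiguitySet c ε P
      = ambiguitySet (fun y => c (finv y.1, finv y.2)) ε (P.map f) :=
  MeasurableEquiv.image_map_ambiguitySet ⟨⟨f, finv, hleft, hright⟩, hf, hfinv⟩ c ε P

/-- Exact propagation of OT ambiguity sets under a Borel bijection with Borel inverse. -/
theorem pushforward_ambiguity_bijective
    {X Y : Type*}
    [MeasurableSpace X] [TopologicalSpace X] [PolishSpace X] [BorelSpace X]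
    [MeasurableSpace Y] [TopologicalSpace Y] [PolishSpace Y] [BorelSpace Y]
    (P : Measure X) [IsProbabilityMeasure P]
    (c : X × X → ℝ≥0∞) (hc : Measurable c) (ε : ℝ≥0∞)
    (f : X → Y) (hf : Measurable f) (hbij : Function.Bijective f)
    (finv : Y → X) (hfinv : Measurable finv)
    (hleft : ∀ x, finv (f x) = x) (hright : ∀ y, f (finv y) = y) :
    (fun μ => μ.map f) '' ambiguitySet c ε P
      = ambiguitySet (fun y => c (finv y.1, finv y.2)) ε (P.map f) :=
  pushforward_ambiguity_bijective_general P c ε f hf finv hfinv hleft hright
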